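/- arXiv:2001.06425 — 2 statements merged into one kernel-verified Lean document; each statement's English description precedes it below -/
import Mathlib

section
/- Let W_mixt(X) := μ‖sym X‖² + μ_c‖skew X‖² + (λμ/(λ+2μ))(tr X)² and define W_Coss(X) := W_mixt(X) − ((μ−μ_c)²/(2(μ+μ_c)))‖Xᵀn₀‖² for 3×3 matrices X with X·n₀ = 0 (n₀ = e₃). Writing X = aX + n₀⊗v with aX the planar 2×2 block and v := Xᵀn₀ ∈ ℝ², one has W_Coss(X) = μ‖sym(aX)‖² + μ_c‖skew(aX)‖² + (λμ/(λ+2μ))(tr(aX))² + (2μμ_c/(μ+μ_c))‖v‖². -/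
open Matrix

noncomputable def symM {n : ℕ} (X : Matrix (Fin n) (Fin n) ℝ) : Matrix (Fin n) (Fin n) ℝ :=
  ((1:ℝ)/2) • (X + X.transpose)

noncomputable def skewM {n : ℕ} (X : Matrix (Fin n) (Fin n) ℝ) : Matrix (Fin n) (Fin n) ℝ :=
  ((1:ℝ)/2) • (X - X.transpose)

noncomputable def fnorm2 {n : ℕ} (X : Matrix (Fin n) (Fin n) ℝ) : ℝ :=
  (X.transpose * X).trace

noncomputable def n0 : Fin 3 → ℝ := fun i => if i = 2 then 1 else 0

/-- upper-left 2×2 block -/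
noncomputable def planar (X : Matrix (Fin 3) (Fin 3) ℝ) : Matrix (Fin 2) (Fin 2) ℝ :=
  X.submatrix (Fin.castLE (by omega)) (Fin.castLE (by omega))

/-- transversal part `v = (X₃₁, X₃₂)` -/
noncomputable def transv (X : Matrix (Fin 3) (Fin 3) ℝ) : Fin 2 → ℝ :=
  fun α => X 2 (Fin.castLE (by omega) α)

/-!
With the third column of `X` zero, `sym X` and `skew X` consist of the corresponding parts of `aX`
plus the entries `±vᵢ/2` in the third row and column, so each of `‖sym X‖²`, `‖skew X‖²` exceeds
its planar counterpart by `‖v‖²/2`, while `tr X = tr aX` and `Xᵀn₀` is the third row `(v, 0)`.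
The transversal coefficient is therefore
`(μ + μc)/2 - (μ - μc)²/(2(μ + μc)) = 2μμc/(μ + μc)`.
-/

section Blocks

variable {m n : ℕ}

lemma fnorm2_eq_sum_sq (A : Matrix (Fin n) (Fin n) ℝ) : fnorm2 A = ∑ i, ∑ j, A i j ^ 2 := by
  rw [fnorm2, trace, Finset.sum_comm]
  simp [mul_apply, sq]

lemma fnorm2_eq_fnorm2_submatrix_castSucc_add (A : Matrix (Fin (n + 1)) (Fin (n + 1)) ℝ) :
    fnorm2 A = fnorm2 (A.submatrix Fin.castSucc Fin.castSucc)
      + ∑ i : Fin n, (A i.castSucc (Fin.last n) ^ 2 + A (Fin.last n) i.castSucc ^ 2)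
      + A (Fin.last n) (Fin.last n) ^ 2 := by
  simp only [fnorm2_eq_sum_sq, Fin.sum_univ_castSucc, Finset.sum_add_distrib, submatrix_apply]
  ring

lemma symM_submatrix (X : Matrix (Fin n) (Fin n) ℝ) (f : Fin m → Fin n) :
    symM (X.submatrix f f) = (symM X).submatrix f f :=
  rfl

lemma skewM_submatrix (X : Matrix (Fin n) (Fin n) ℝ) (f : Fin m → Fin n) :
    skewM (X.submatrix f f) = (skewM X).submatrix f f :=
  rfl

lemma trace_eq_trace_submatrix_castSucc (X : Matrix (Fin (n + 1)) (Fin (n + 1)) ℝ)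
    (h : X (Fin.last n) (Fin.last n) = 0) :
    X.trace = (X.submatrix Fin.castSucc Fin.castSucc).trace := by
  simp [trace, Fin.sum_univ_castSucc, h]

lemma dotProduct_row_last_self (X : Matrix (Fin (n + 1)) (Fin (n + 1)) ℝ)
    (h : X (Fin.last n) (Fin.last n) = 0) :
    X.row (Fin.last n) ⬝ᵥ X.row (Fin.last n) = ∑ i : Fin n, X (Fin.last n) i.castSucc ^ 2 := by
  simp [dotProduct, Fin.sum_univ_castSucc, h, sq]

lemma fnorm2_symM_eq_of_col_last_eq_zero (X : Matrix (Fin (n + 1)) (Fin (n + 1)) ℝ)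
    (hX : ∀ i, X i (Fin.last n) = 0) :
    fnorm2 (symM X) = fnorm2 (symM (X.submatrix Fin.castSucc Fin.castSucc))
      + (∑ i : Fin n, X (Fin.last n) i.castSucc ^ 2) / 2 := by
  rw [fnorm2_eq_fnorm2_submatrix_castSucc_add, symM_submatrix, Finset.sum_div]
  simp only [symM, Matrix.smul_apply, Matrix.add_apply, transpose_apply, hX, add_zero, zero_add,
    smul_eq_mul, mul_zero]
  ring_nf

lemma fnorm2_skewM_eq_of_col_last_eq_zero (X : Matrix (Fin (n + 1)) (Fin (n + 1)) ℝ)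
    (hX : ∀ i, X i (Fin.last n) = 0) :
    fnorm2 (skewM X) = fnorm2 (skewM (X.submatrix Fin.castSucc Fin.castSucc))
      + (∑ i : Fin n, X (Fin.last n) i.castSucc ^ 2) / 2 := by
  rw [fnorm2_eq_fnorm2_submatrix_castSucc_add, skewM_submatrix, Finset.sum_div]
  simp only [skewM, Matrix.smul_apply, Matrix.sub_apply, transpose_apply, hX, sub_zero, zero_sub,
    smul_eq_mul, mul_zero]
  ring_nf

end Blocks

lemma n0_eq_single : n0 = Pi.single (Fin.last 2) 1 := by
  funext i
  simp [n0, Pi.single_apply]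

lemma planar_eq_submatrix_castSucc (X : Matrix (Fin 3) (Fin 3) ℝ) :
    planar X = X.submatrix Fin.castSucc Fin.castSucc :=
  rfl

lemma transv_dotProduct_self (X : Matrix (Fin 3) (Fin 3) ℝ) :
    transv X ⬝ᵥ transv X = ∑ i : Fin 2, X (Fin.last 2) i.castSucc ^ 2 := by
  simp [transv, dotProduct, sq]

lemma transversal_coeff (μ μc : ℝ) (h : μ + μc ≠ 0) :
    (μ + μc) / 2 - (μ - μc) ^ 2 / (2 * (μ + μc)) = 2 * μ * μc / (μ + μc) := by
  field_simp
  ring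

theorem WCoss_planar_transversal_split_general (μ μc lam : ℝ)
    (h2 : μ + μc ≠ 0)
    (X : Matrix (Fin 3) (Fin 3) ℝ) (hX : X *ᵥ n0 = 0) :
    (μ * fnorm2 (symM X) + μc * fnorm2 (skewM X)
        + (lam * μ / (lam + 2 * μ)) * X.trace ^ 2)
      - ((μ - μc) ^ 2 / (2 * (μ + μc))) * ((X.transpose *ᵥ n0) ⬝ᵥ (X.transpose *ᵥ n0)) =
    μ * fnorm2 (symM (planar X)) + μc * fnorm2 (skewM (planar X))
      + (lam * μ / (lam + 2 * μ)) * (planar X).trace ^ 2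
      + (2 * μ * μc / (μ + μc)) * (transv X ⬝ᵥ transv X) := by
  have hcol : ∀ i, X i (Fin.last 2) = 0 := fun i => by
    simpa [n0_eq_single, mulVec_single_one] using congrFun hX i
  rw [n0_eq_single, mulVec_single_one, col_transpose, dotProduct_row_last_self X (hcol _),
    fnorm2_symM_eq_of_col_last_eq_zero X hcol, fnorm2_skewM_eq_of_col_last_eq_zero X hcol,
    trace_eq_trace_submatrix_castSucc X (hcol _), ← planar_eq_submatrix_castSucc,
    transv_dotProduct_self, ← transversal_coeff μ μc h2]
  ring

/-- For `X` with vanishing third column,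
`W_Coss(X) = W_mixt(X) − ((μ−μ_c)²/(2(μ+μ_c)))‖Xᵀn₀‖²` equals
`μ‖sym(aX)‖² + μ_c‖skew(aX)‖² + (λμ/(λ+2μ))(tr(aX))² + (2μμ_c/(μ+μ_c))‖v‖²`. -/
theorem WCoss_planar_transversal_split (μ μc lam : ℝ)
    (h1 : lam + 2 * μ ≠ 0) (h2 : μ + μc ≠ 0)
    (X : Matrix (Fin 3) (Fin 3) ℝ) (hX : X *ᵥ n0 = 0) :
    (μ * fnorm2 (symM X) + μc * fnorm2 (skewM X)
        + (lam * μ / (lam + 2 * μ)) * X.trace ^ 2)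
      - ((μ - μc) ^ 2 / (2 * (μ + μc))) * ((X.transpose *ᵥ n0) ⬝ᵥ (X.transpose *ᵥ n0)) =
    μ * fnorm2 (symM (planar X)) + μc * fnorm2 (skewM (planar X))
      + (lam * μ / (lam + 2 * μ)) * (planar X).trace ^ 2
      + (2 * μ * μc / (μ + μc)) * (transv X ⬝ᵥ transv X) :=
  WCoss_planar_transversal_split_general μ μc lam h2 X hX
end

section
/- If μ > 0, μ_c > 0 and 3λ + 2μ > 0, then the quadratic form W_Coss(X) := μ‖dev_s sym(aX)‖² + μ_c‖skew(aX)‖² + (μ(3λ+2μ)/(2(λ+2μ)))(tr X)² + (2μμ_c/(μ+μ_c))‖v‖² is positive definite on the space of 3×3 real matrices X with vanishing third column, where aX is the planar 2×2 block, v = (X_{31},X_{32}), and dev_s Y := Y − (tr Y/2)·I₂. (Note λ+2μ > 0 follows from the hypotheses.) -/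
open Matrix

noncomputable def devS (Y : Matrix (Fin 2) (Fin 2) ℝ) : Matrix (Fin 2) (Fin 2) ℝ :=
  Y - (Y.trace / 2) • (1 : Matrix (Fin 2) (Fin 2) ℝ)

noncomputable def WCoss (μ μc lam : ℝ) (X : Matrix (Fin 3) (Fin 3) ℝ) : ℝ :=
  μ * fnorm2 (devS (symM (planar X))) + μc * fnorm2 (skewM (planar X))
    + (μ * (3 * lam + 2 * μ) / (2 * (lam + 2 * μ))) * X.trace ^ 2
    + (2 * μ * μc / (μ + μc)) * (transv X ⬝ᵥ transv X)

/-!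
The four terms of `W_Coss` are squared norms with positive weights (`μ > 0` and `3λ + 2μ > 0`
give `λ + 2μ > 0`). If `W_Coss X = 0`, each norm vanishes: since `tr X = tr aX = 0`, the deviator
of `sym aX` is `sym aX` itself, so `aX = sym aX + skew aX = 0`; with `v = 0` and the vanishing
third column this forces `X = 0`.
-/

theorem fnorm2_eq_trace_conjTranspose_mul_self {n : ℕ} (X : Matrix (Fin n) (Fin n) ℝ) :
    fnorm2 X = (Xᴴ * X).trace := by
  rw [fnorm2, conjTranspose_eq_transpose_of_trivial]

theorem fnorm2_nonneg {n : ℕ} (X : Matrix (Fin n) (Fin n) ℝ) : 0 ≤ fnorm2 X := by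
  rw [fnorm2_eq_trace_conjTranspose_mul_self]
  exact (posSemidef_conjTranspose_mul_self X).trace_nonneg

theorem fnorm2_eq_zero_iff {n : ℕ} {X : Matrix (Fin n) (Fin n) ℝ} : fnorm2 X = 0 ↔ X = 0 := by
  rw [fnorm2_eq_trace_conjTranspose_mul_self, trace_conjTranspose_mul_self_eq_zero_iff]

theorem symM_add_skewM {n : ℕ} (X : Matrix (Fin n) (Fin n) ℝ) : symM X + skewM X = X := by
  rw [symM, skewM, ← smul_add, add_add_sub_cancel, ← two_smul ℝ X, smul_smul]
  norm_num

theorem trace_symM {n : ℕ} (X : Matrix (Fin n) (Fin n) ℝ) : (symM X).trace = X.trace := by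
  rw [symM, trace_smul, trace_add, trace_transpose, smul_eq_mul]
  ring

theorem devS_of_trace_eq_zero {Y : Matrix (Fin 2) (Fin 2) ℝ} (h : Y.trace = 0) : devS Y = Y := by
  simp [devS, h]

theorem eq_zero_of_devS_symM_eq_zero {Y : Matrix (Fin 2) (Fin 2) ℝ} (hdev : devS (symM Y) = 0)
    (hskew : skewM Y = 0) (htr : Y.trace = 0) : Y = 0 := by
  rw [devS_of_trace_eq_zero ((trace_symM Y).trans htr)] at hdev
  rw [← symM_add_skewM Y, hdev, hskew, add_zero]

theorem col_two_eq_zero_of_mulVec_n0 {X : Matrix (Fin 3) (Fin 3) ℝ} (h : X *ᵥ n0 = 0) (i : Fin 3) :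
    X i 2 = 0 := by
  simpa [mulVec, dotProduct, n0] using congrFun h i

theorem trace_eq_trace_planar {X : Matrix (Fin 3) (Fin 3) ℝ} (h : ∀ i, X i 2 = 0) :
    X.trace = (planar X).trace := by
  simp [trace, Fin.sum_univ_succ, planar, h]

theorem eq_zero_of_planar_eq_zero_of_transv_eq_zero {X : Matrix (Fin 3) (Fin 3) ℝ}
    (hcol : ∀ i, X i 2 = 0) (hp : planar X = 0) (ht : transv X = 0) : X = 0 := by
  ext i j
  fin_cases j
  · fin_cases i
    · exact congrFun (congrFun hp 0) 0
    · exact congrFun (congrFun hp 1) 0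
    · exact congrFun ht 0
  · fin_cases i
    · exact congrFun (congrFun hp 0) 1
    · exact congrFun (congrFun hp 1) 1
    · exact congrFun ht 1
  · exact hcol i

theorem WCoss_zero (μ μc lam : ℝ) : WCoss μ μc lam 0 = 0 := by
  simp [WCoss, fnorm2, devS, symM, skewM, planar, transv]

/-- If `μ > 0`, `μ_c > 0`, `3λ+2μ > 0` then `W_Coss` is positive definite on
matrices with vanishing third column. -/
theorem WCoss_positive_definite (μ μc lam : ℝ)
    (hμ : 0 < μ) (hμc : 0 < μc) (hlam : 0 < 3 * lam + 2 * μ) :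
    ∀ X : Matrix (Fin 3) (Fin 3) ℝ, X *ᵥ n0 = 0 →
      0 ≤ WCoss μ μc lam X ∧ (WCoss μ μc lam X = 0 ↔ X = 0) := by
  intro X hX
  have hcol := col_two_eq_zero_of_mulVec_n0 hX
  have hK : 0 < μ * (3 * lam + 2 * μ) / (2 * (lam + 2 * μ)) := by
    have : 0 < lam + 2 * μ := by linarith
    positivity
  have hM : 0 < 2 * μ * μc / (μ + μc) := by positivity
  have hdev := mul_nonneg hμ.le (fnorm2_nonneg (devS (symM (planar X))))
  have hskew := mul_nonneg hμc.le (fnorm2_nonneg (skewM (planar X)))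
  have htr := mul_nonneg hK.le (sq_nonneg X.trace)
  have hv := mul_nonneg hM.le (dotProduct_self_star_nonneg (transv X))
  rw [star_trivial] at hv
  have hplanar := add_nonneg (add_nonneg hdev hskew) htr
  refine ⟨add_nonneg hplanar hv, fun hW => ?_, fun h => h ▸ WCoss_zero μ μc lam⟩
  rw [WCoss, add_eq_zero_iff_of_nonneg hplanar hv,
    add_eq_zero_iff_of_nonneg (add_nonneg hdev hskew) htr,
    add_eq_zero_iff_of_nonneg hdev hskew] at hW
  obtain ⟨⟨⟨hdev, hskew⟩, htr⟩, hv⟩ := hW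
  simp only [mul_eq_zero, hμ.ne', hμc.ne', hK.ne', hM.ne', false_or, fnorm2_eq_zero_iff,
    pow_eq_zero_iff two_ne_zero, dotProduct_self_eq_zero] at hdev hskew htr hv
  rw [trace_eq_trace_planar hcol] at htr
  exact eq_zero_of_planar_eq_zero_of_transv_eq_zero hcol
    (eq_zero_of_devS_symM_eq_zero hdev hskew htr) hv
end
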